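/- arXiv:1711.02049 — 5 statements merged into one kernel-verified Lean document; each statement's English description precedes it below -/
import Mathlib

section
/- For every integer k ≥ 1 there exist an integer n > k and an n×n matrix X with entries in {0,1} such that X satisfies the k-configuration exhibiting condition but does not satisfy the convex Ramsey condition. -/
/-- An `n × m` matrix (given as a function) has entries in `{0,1}`. -/
def Entries01 {n m : ℕ} (X : Fin n → Fin m → ℝ) : Prop :=
  ∀ i j, X i j = 0 ∨ X i j = 1

/-- The convex Ramsey condition: there is a probability vector `P` such that
`∑ i, P i * (X i j - X i k) ≤ 1/2` for every pair of distinct columns `j, k`. -/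
def ConvexRamsey {n m : ℕ} (X : Fin n → Fin m → ℝ) : Prop :=
  ∃ P : Fin n → ℝ, (∀ i, 0 ≤ P i) ∧ (∑ i, P i = 1) ∧
    ∀ j k : Fin m, j ≠ k → ∑ i, P i * (X i j - X i k) ≤ 1 / 2

/-- The `k`-configuration exhibiting condition: for every `0/1`-pattern `σ` of length `k`
and every strictly increasing choice of `k` columns, some row realizes the pattern
on those columns. -/
def ConfigExhibit {n m : ℕ} (k : ℕ) (X : Fin n → Fin m → ℝ) : Prop :=
  ∀ σ : Fin k → ℝ, (∀ i, σ i = 0 ∨ σ i = 1) →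
    ∀ l : Fin k → Fin m, StrictMono l →
      ∃ j : Fin n, ∀ i : Fin k, X j (l i) = σ i


/-!
Fill an `n × n` array with symbols from an alphabet of size `q = 2 ^ 32` and call an entry marked
when it is `0`. Counting arrays (a union bound for uniformly random ones) shows that for
`n = 16 D`, `D = 2 ^ (37 k)`, some array realises every pattern of marks on every `k` distinct
columns in some row, while no row has more than `D` marks. Reading a marked entry as `1` on the
first half `B` of the columns and as `0` on the second half keeps all `k`-configurations. Given a
probability vector `P`, every row has at most `D = #B / 8` ones in `B` and at most `D` zeros
outside `B`, so averaging yields a column of `B` of `P`-weight at most `1/8` and one outside `B`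
of `P`-weight at least `7/8`: they differ by more than `1/2`.
-/

open Finset Fintype Function

section Counting
variable {ι β : Type*} [Fintype ι] [DecidableEq ι] [Fintype β] [DecidableEq β]

theorem card_filter_forall_mem (s : Finset ι) (t : ι → Finset β) :
    #{f : ι → β | ∀ i ∈ s, f i ∈ t i} = (∏ i ∈ s, #(t i)) * card β ^ (card ι - #s) := by
  have : ({f : ι → β | ∀ i ∈ s, f i ∈ t i} : Finset _) =
      piFinset fun i ↦ if i ∈ s then t i else univ := by
    ext f; simp only [mem_filter, mem_univ, true_and, mem_piFinset]
    refine forall_congr' fun i ↦ ?_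
    split_ifs <;> simp [*]
  rw [this, card_piFinset]
  simp only [apply_ite card, card_univ]
  rw [prod_ite, prod_const, filter_mem_eq_inter, univ_inter, ← card_compl]
  congr 3
  ext; simp

theorem card_filter_forall_eq (s : Finset ι) (g : ι → β) :
    #{f : ι → β | ∀ i ∈ s, f i = g i} = card β ^ (card ι - #s) := by
  simpa using card_filter_forall_mem s fun i ↦ {g i}

theorem card_filter_exists_mem_le (T : Finset β) :
    #{f : ι → β | ∃ i, f i ∈ T} ≤ card ι * (#T * card β ^ (card ι - 1)) := by
  calc #{f : ι → β | ∃ i, f i ∈ T}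
      ≤ #(univ.biUnion fun i ↦ ({f : ι → β | ∀ i' ∈ ({i} : Finset ι), f i' ∈ T} : Finset _)) :=
        card_le_card fun f hf ↦ by simpa using hf
    _ ≤ card ι * (#T * card β ^ (card ι - 1)) :=
        card_biUnion_le_card_mul _ _ _ fun i _ ↦ by rw [card_filter_forall_mem]; simp

end Counting

def ExhibitsPatterns {ι κ α : Type*} (k : ℕ) (a : α) (ω : ι → κ → α) : Prop :=
  ∀ l : Fin k → κ, Injective l → ∀ σ : Fin k → Bool, ∃ i, ∀ t, (ω i (l t) = a ↔ σ t)

section Patterns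
variable {κ α : Type*} [Fintype κ] [DecidableEq κ] [Fintype α] [DecidableEq α]

theorem card_filter_not_pattern_le [Nontrivial α] {k : ℕ} {l : Fin k → κ} (hl : Injective l)
    (a : α) (σ : Fin k → Bool) :
    #{v : κ → α | ¬ ∀ t, (v (l t) = a ↔ σ t)} ≤ card α ^ (card κ - k) * (card α ^ k - 1) := by
  obtain ⟨b, hba⟩ := exists_ne a
  let g : κ → α := extend l (fun t ↦ if σ t then a else b) fun _ ↦ a
  have hmatch : #{v : κ → α | ∀ j ∈ univ.image l, v j = g j} ≤
      #{v : κ → α | ∀ t, (v (l t) = a ↔ σ t)} := by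
    refine card_le_card fun v hv ↦ ?_
    simp only [mem_filter, mem_univ, true_and, mem_image, forall_exists_index,
      forall_apply_eq_imp_iff] at hv ⊢
    intro t
    rw [hv t]
    simp only [g, hl.extend_apply]
    cases σ t <;> simp [hba]
  rw [card_filter_forall_eq, card_image_of_injective _ hl, Finset.card_fin] at hmatch
  have hk : k ≤ card κ := by simpa using card_le_of_injective l hl
  rw [filter_not, card_sdiff_of_subset (filter_subset _ _), card_univ, card_fun, Nat.mul_sub_one,
    ← pow_add, Nat.sub_add_cancel hk]
  omega

theorem card_filter_lt_card_filter_eq_le (a : α) (D : ℕ) :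
    #{v : κ → α | D < #{j | v j = a}} ≤
      (card κ).choose (D + 1) * card α ^ (card κ - (D + 1)) := by
  calc #{v : κ → α | D < #{j | v j = a}}
      ≤ #((univ.powersetCard (D + 1)).biUnion fun s ↦
          ({v : κ → α | ∀ j ∈ s, v j = a} : Finset _)) := by
        refine card_le_card fun v hv ↦ ?_
        simp only [mem_filter, mem_univ, true_and] at hv
        obtain ⟨s, hs, hcard⟩ := exists_subset_card_eq hv
        simp only [mem_biUnion, mem_powersetCard, mem_filter, mem_univ, true_and]
        exact ⟨s, ⟨subset_univ s, hcard⟩, fun j hj ↦ by simpa using hs hj⟩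
    _ ≤ _ := by
        refine (card_biUnion_le_card_mul _ _ (card α ^ (card κ - (D + 1))) fun s hs ↦ ?_).trans_eq
          (by simp)
        rw [mem_powersetCard] at hs
        rw [card_filter_forall_eq s fun _ ↦ a, hs.2]

variable {ι : Type*} [Fintype ι] [DecidableEq ι]

open scoped Classical in
theorem card_filter_not_exhibitsPatterns_le [Nontrivial α] (k : ℕ) (a : α) :
    #{ω : ι → κ → α | ¬ ExhibitsPatterns k a ω} ≤
      card κ ^ k * 2 ^ k * (card α ^ (card κ - k) * (card α ^ k - 1)) ^ card ι := by
  let fails (p : (Fin k → κ) × (Fin k → Bool)) : Finset (κ → α) :=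
    {v | ¬ ∀ t, (v (p.1 t) = a ↔ p.2 t)}
  calc #{ω : ι → κ → α | ¬ ExhibitsPatterns k a ω}
      ≤ #(({p | Injective p.1} : Finset ((Fin k → κ) × (Fin k → Bool))).biUnion
          fun p ↦ piFinset fun _ : ι ↦ fails p) := by
        refine card_le_card fun ω hω ↦ ?_
        simp only [ExhibitsPatterns, mem_filter, mem_univ, true_and, not_forall,
          not_exists] at hω
        obtain ⟨l, hl, σ, hσ⟩ := hω
        simp only [mem_biUnion, mem_filter, mem_univ, true_and, mem_piFinset, fails]
        exact ⟨(l, σ), hl, fun i ↦ by simpa using hσ i⟩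
    _ ≤ #({p | Injective p.1} : Finset ((Fin k → κ) × (Fin k → Bool))) *
          (card α ^ (card κ - k) * (card α ^ k - 1)) ^ card ι := by
        refine card_biUnion_le_card_mul _ _ _ fun p hp ↦ ?_
        rw [mem_filter] at hp
        rw [card_piFinset, prod_const, card_univ]
        exact Nat.pow_le_pow_left (card_filter_not_pattern_le hp.2 a p.2) _
    _ ≤ _ := Nat.mul_le_mul_right _ ((card_filter_le _ _).trans (by simp))

theorem card_filter_exists_lt_card_filter_eq_le (a : α) (D : ℕ) :
    #{ω : ι → κ → α | ∃ i, D < #{j | ω i j = a}} ≤ card ι *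
      ((card κ).choose (D + 1) * card α ^ (card κ - (D + 1)) * (card α ^ card κ) ^ (card ι - 1)) := by
  have := card_filter_exists_mem_le (ι := ι) ({v : κ → α | D < #{j | v j = a}} : Finset _)
  simp only [mem_filter, mem_univ, true_and] at this
  refine this.trans ?_
  rw [card_fun]
  gcongr
  exact card_filter_lt_card_filter_eq_le a D

/- For a uniformly random array, `hpat` bounds the expected number of unrealised patterns by `1/2`
and `hheavy` the expected number of rows with more than `D` entries `a` by less than `1/2`. -/
theorem exists_exhibitsPatterns_and_sparse [Nonempty ι] [Nontrivial α] {k D : ℕ} (a : α)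
    (hk : k ≤ card κ) (hD : D < card κ)
    (hpat : 2 * (card κ ^ k * 2 ^ k) * (card α ^ k - 1) ^ card ι ≤ (card α ^ k) ^ card ι)
    (hheavy : 2 * (card ι * (card κ).choose (D + 1)) < card α ^ (D + 1)) :
    ∃ ω : ι → κ → α, ExhibitsPatterns k a ω ∧ ∀ i, #{j | ω i j = a} ≤ D := by
  classical
  have htotal : card (ι → κ → α) = (card α ^ card κ) ^ card ι := by simp
  have hfew_unexhibited : 2 * #{ω : ι → κ → α | ¬ ExhibitsPatterns k a ω} ≤ card (ι → κ → α) :=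
    calc 2 * #{ω : ι → κ → α | ¬ ExhibitsPatterns k a ω}
        ≤ 2 * (card κ ^ k * 2 ^ k * (card α ^ (card κ - k) * (card α ^ k - 1)) ^ card ι) := by
          gcongr; exact card_filter_not_exhibitsPatterns_le k a
      _ = (card α ^ (card κ - k)) ^ card ι *
            (2 * (card κ ^ k * 2 ^ k) * (card α ^ k - 1) ^ card ι) := by ring
      _ ≤ (card α ^ (card κ - k)) ^ card ι * (card α ^ k) ^ card ι := by gcongr
      _ = card (ι → κ → α) := by rw [htotal, ← mul_pow, ← pow_add, Nat.sub_add_cancel hk]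
  have hfew_heavy : 2 * #{ω : ι → κ → α | ¬ ∀ i, #{j | ω i j = a} ≤ D} < card (ι → κ → α) :=
    calc 2 * #{ω : ι → κ → α | ¬ ∀ i, #{j | ω i j = a} ≤ D}
        ≤ 2 * (card ι * ((card κ).choose (D + 1) * card α ^ (card κ - (D + 1)) *
            (card α ^ card κ) ^ (card ι - 1))) := by
          simp only [not_forall, not_le]
          gcongr
          exact card_filter_exists_lt_card_filter_eq_le a D
      _ = 2 * (card ι * (card κ).choose (D + 1)) *
            (card α ^ (card κ - (D + 1)) * (card α ^ card κ) ^ (card ι - 1)) := by ring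
      _ < card α ^ (D + 1) * (card α ^ (card κ - (D + 1)) * (card α ^ card κ) ^ (card ι - 1)) :=
          Nat.mul_lt_mul_of_pos_right hheavy (by positivity)
      _ = card (ι → κ → α) := by
          rw [htotal, ← mul_assoc, ← pow_add, Nat.add_sub_cancel' hD, ← pow_succ',
            Nat.sub_add_cancel card_pos]
  by_contra! hbad
  have hcover : (univ : Finset (ι → κ → α)) ⊆
      ({ω | ¬ ExhibitsPatterns k a ω} : Finset (ι → κ → α)) ∪
        ({ω | ¬ ∀ i, #{j | ω i j = a} ≤ D} : Finset (ι → κ → α)) := fun ω _ ↦ by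
    by_cases hω : ExhibitsPatterns k a ω <;> simp [hω, hbad]
  have := (card_le_card hcover).trans (card_union_le _ _)
  rw [card_univ] at this
  omega

end Patterns

theorem two_pow_mul_pow_le_succ_pow (m M : ℕ) :
    2 ^ M * m ^ ((m + 1) * M) ≤ (m + 1) ^ ((m + 1) * M) := by
  have bernoulli : 2 * m ^ (m + 1) ≤ (m + 1) ^ (m + 1) :=
    calc 2 * m ^ (m + 1) = m ^ (m + 1) + m * m ^ m := by ring
      _ ≤ m ^ (m + 1) + (m + 1) * m ^ m := by gcongr; omega
      _ ≤ (m + 1) ^ (m + 1) := by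
        simpa using pow_add_mul_le_add_pow m.zero_le (Nat.zero_le (2 * m + 1)) (m + 1)
  rw [pow_mul, pow_mul, ← mul_pow]
  exact Nat.pow_le_pow_left bernoulli M

/- `pattern_count_le` and `heavy_count_lt` are the hypotheses `hpat` and `hheavy` of
`exists_exhibitsPatterns_and_sparse` for `q = 2 ^ 32` symbols, `n = 16 D` rows and columns and
`D = 2 ^ (37 k)`. The choice makes `n = q ^ k * 2 ^ (5 k + 4)`, so that
`(1 - q ^ (-k)) ^ n ≤ 2 ^ (-2 ^ (5 k + 4))` by `two_pow_mul_pow_le_succ_pow`. -/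
theorem pattern_count_le (k : ℕ) :
    2 * ((16 * 2 ^ (37 * k)) ^ k * 2 ^ k) * ((2 ^ 32) ^ k - 1) ^ (16 * 2 ^ (37 * k)) ≤
      ((2 ^ 32) ^ k) ^ (16 * 2 ^ (37 * k)) := by
  obtain ⟨m, hm⟩ : ∃ m, (2 ^ 32) ^ k = m + 1 :=
    ⟨_, (Nat.succ_pred_eq_of_pos (by positivity)).symm⟩
  have h16 : 16 * 2 ^ (37 * k) = 2 ^ (37 * k + 4) := by ring
  have hn : 16 * 2 ^ (37 * k) = (m + 1) * 2 ^ (5 * k + 4) := by rw [← hm, ← pow_mul]; ring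
  have hexp : 37 * k ^ 2 + 5 * k + 1 ≤ 2 ^ (5 * k + 4) := by
    rcases Nat.eq_zero_or_pos k with rfl | hpos
    · norm_num
    set x := 2 ^ k with hx
    have hkx : k < x := k.lt_two_pow_self
    have hx8 : 8 ≤ x ^ 3 :=
      calc 8 = (2 ^ 1) ^ 3 := rfl
        _ ≤ x ^ 3 := Nat.pow_le_pow_left (Nat.pow_le_pow_right two_pos hpos) 3
    calc 37 * k ^ 2 + 5 * k + 1 ≤ 8 * x ^ 2 * 16 := by nlinarith
      _ ≤ x ^ 3 * x ^ 2 * 16 := by gcongr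
      _ = 2 ^ (5 * k + 4) := by rw [hx]; ring
  have hc : 2 * ((16 * 2 ^ (37 * k)) ^ k * 2 ^ k) ≤ 2 ^ 2 ^ (5 * k + 4) :=
    calc 2 * ((16 * 2 ^ (37 * k)) ^ k * 2 ^ k) = 2 ^ (37 * k ^ 2 + 5 * k + 1) := by
          rw [h16, ← pow_mul, ← pow_add, ← pow_succ']; ring_nf
      _ ≤ 2 ^ 2 ^ (5 * k + 4) := Nat.pow_le_pow_right two_pos hexp
  rw [hm, Nat.add_sub_cancel, hn]
  rw [hn] at hc
  exact (Nat.mul_le_mul_right _ hc).trans (two_pow_mul_pow_le_succ_pow m _)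

theorem heavy_count_lt (D : ℕ) : 2 * (16 * D * (16 * D).choose (D + 1)) < (2 ^ 32) ^ (D + 1) :=
  calc 2 * (16 * D * (16 * D).choose (D + 1)) ≤ 2 * (16 * D * 2 ^ (16 * D)) := by
        gcongr; exact Nat.choose_le_two_pow _ _
    _ < 2 * (2 ^ (16 * D) * 2 ^ (16 * D)) := by gcongr; exact Nat.lt_two_pow_self
    _ ≤ (2 ^ 32) ^ (D + 1) := by
        rw [← pow_add, ← pow_succ', ← pow_mul]
        exact Nat.pow_le_pow_right two_pos (by omega)

section Matrices
variable {ι κ α : Type*} [DecidableEq κ] [DecidableEq α]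

def markMatrix (B : Finset κ) (a : α) (ω : ι → κ → α) : ι → κ → ℝ :=
  fun i j ↦ if (j ∈ B ↔ ω i j = a) then 1 else 0

theorem entries01_markMatrix {n m : ℕ} (B : Finset (Fin m)) (a : α) (ω : Fin n → Fin m → α) :
    Entries01 (markMatrix B a ω) := fun i j ↦ by
  unfold markMatrix; split_ifs <;> simp

theorem configExhibit_markMatrix {n m k : ℕ} {a : α} {ω : Fin n → Fin m → α}
    (hω : ExhibitsPatterns k a ω) (B : Finset (Fin m)) :
    ConfigExhibit k (markMatrix B a ω) := by
  intro σ hσ l hl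
  obtain ⟨i, hi⟩ := hω l hl.injective fun t ↦ decide (l t ∈ B ↔ σ t = 1)
  refine ⟨i, fun t ↦ ?_⟩
  have := hi t
  unfold markMatrix
  rcases hσ t with h | h <;> by_cases hB : l t ∈ B <;> simp_all

theorem sum_markMatrix_le [Fintype κ] (B : Finset κ) (a : α) (ω : ι → κ → α)
    (i : ι) : ∑ j ∈ B, markMatrix B a ω i j ≤ #{j | ω i j = a} := by
  calc ∑ j ∈ B, markMatrix B a ω i j = #{j ∈ B | ω i j = a} := by
        rw [natCast_card_filter]
        exact sum_congr rfl fun j hj ↦ by simp [markMatrix, hj]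
    _ ≤ #{j | ω i j = a} := by
        exact_mod_cast card_le_card (filter_subset_filter _ (subset_univ B))

theorem sum_one_sub_markMatrix_le [Fintype κ] (B : Finset κ)
    (a : α) (ω : ι → κ → α) (i : ι) :
    ∑ j ∈ Bᶜ, (1 - markMatrix B a ω i j) ≤ #{j | ω i j = a} := by
  calc ∑ j ∈ Bᶜ, (1 - markMatrix B a ω i j) = #{j ∈ Bᶜ | ω i j = a} := by
        rw [natCast_card_filter]
        refine sum_congr rfl fun j hj ↦ ?_
        rw [mem_compl] at hj
        by_cases h : ω i j = a <;> simp [markMatrix, hj, h]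
    _ ≤ #{j | ω i j = a} := by
        exact_mod_cast card_le_card (filter_subset_filter _ (subset_univ Bᶜ))

end Matrices

theorem exists_mem_sum_mul_le {ι κ : Type*} [Fintype ι] {P : ι → ℝ} (hP0 : ∀ i, 0 ≤ P i)
    (hP1 : ∑ i, P i = 1) (Y : ι → κ → ℝ) {s : Finset κ} (hs : s.Nonempty) {c : ℝ}
    (hY : ∀ i, ∑ j ∈ s, Y i j ≤ c * #s) : ∃ j ∈ s, ∑ i, P i * Y i j ≤ c := by
  refine exists_le_of_sum_le hs ?_
  calc ∑ j ∈ s, ∑ i, P i * Y i j = ∑ i, P i * ∑ j ∈ s, Y i j := by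
        rw [sum_comm]; simp only [mul_sum]
    _ ≤ ∑ i, P i * (c * #s) := by gcongr with i; exacts [hP0 i, hY i]
    _ = ∑ j ∈ s, c := by rw [← sum_mul, hP1]; simp [mul_comm]

theorem not_convexRamsey_of_sum_le {n m : ℕ} (X : Fin n → Fin m → ℝ) {B A : Finset (Fin m)}
    (hB : B.Nonempty) (hA : A.Nonempty) {c : ℝ} (hc : c < 1 / 4)
    (hXB : ∀ i, ∑ j ∈ B, X i j ≤ c * #B) (hXA : ∀ i, ∑ j ∈ A, (1 - X i j) ≤ c * #A) :
    ¬ ConvexRamsey X := by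
  rintro ⟨P, hP0, hP1, hP⟩
  obtain ⟨j₀, -, hj₀⟩ := exists_mem_sum_mul_le hP0 hP1 X hB hXB
  obtain ⟨j₁, -, hj₁⟩ := exists_mem_sum_mul_le hP0 hP1 (fun i j ↦ 1 - X i j) hA hXA
  have hsub : ∑ i, P i * (X i j₁ - X i j₀) = ∑ i, P i * X i j₁ - ∑ i, P i * X i j₀ := by
    simp only [mul_sub, sum_sub_distrib]
  have hcompl : ∑ i, P i * (1 - X i j₁) = 1 - ∑ i, P i * X i j₁ := by
    simp only [mul_sub, sum_sub_distrib, mul_one, hP1]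
  have hne : j₁ ≠ j₀ := by rintro rfl; linarith
  linarith [hP j₁ j₀ hne]

theorem exists_config_exhibiting_not_convexRamsey_general (k : ℕ) :
    ∃ n : ℕ, k < n ∧ ∃ X : Fin n → Fin n → ℝ,
      Entries01 X ∧ ConfigExhibit k X ∧ ¬ ConvexRamsey X := by
  set D := 2 ^ (37 * k)
  have hkD : k < D := k.lt_two_pow_self.trans_le (Nat.pow_le_pow_right two_pos (by omega))
  obtain ⟨ω, hω, hsparse⟩ := exists_exhibitsPatterns_and_sparse (ι := Fin (16 * D))
    (κ := Fin (16 * D)) (α := Fin (2 ^ 32)) (k := k) (D := D) 0 (by rw [Fintype.card_fin]; omega)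
    (by rw [Fintype.card_fin]; omega)
    (by simpa using pattern_count_le k) (by simpa using heavy_count_lt D)
  let B : Finset (Fin (16 * D)) := {j | (j : ℕ) < 8 * D}
  have hB : #B = 8 * D := by simp [B, Fin.card_filter_val_lt]
  have hBc : #Bᶜ = 8 * D := by rw [card_compl, hB, Fintype.card_fin]; omega
  refine ⟨16 * D, by omega, markMatrix B 0 ω, entries01_markMatrix B 0 ω,
    configExhibit_markMatrix hω B, not_convexRamsey_of_sum_le _ (B := B) (A := Bᶜ) (c := 1 / 8)
      (card_pos.mp (by omega)) (card_pos.mp (by omega)) (by norm_num) (fun i ↦ ?_) fun i ↦ ?_⟩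
  · calc ∑ j ∈ B, markMatrix B 0 ω i j ≤ #{j | ω i j = 0} := sum_markMatrix_le B 0 ω i
      _ ≤ (D : ℝ) := by exact_mod_cast hsparse i
      _ = 1 / 8 * #B := by rw [hB]; push_cast; ring
  · calc ∑ j ∈ Bᶜ, (1 - markMatrix B 0 ω i j) ≤ #{j | ω i j = 0} :=
          sum_one_sub_markMatrix_le B 0 ω i
      _ ≤ (D : ℝ) := by exact_mod_cast hsparse i
      _ = 1 / 8 * #Bᶜ := by rw [hBc]; push_cast; ring

/-- For every integer `k ≥ 1` there exist `n > k` and an `n × n` matrix with entries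
in `{0,1}` satisfying the `k`-configuration exhibiting condition but not the
convex Ramsey condition. -/
theorem exists_config_exhibiting_not_convexRamsey (k : ℕ) (hk : 1 ≤ k) :
    ∃ n : ℕ, k < n ∧ ∃ X : Fin n → Fin n → ℝ,
      Entries01 X ∧ ConfigExhibit k X ∧ ¬ ConvexRamsey X :=
  exists_config_exhibiting_not_convexRamsey_general k
end

section
/- There exists N such that for every even integer n ≥ N there is an n×n matrix with entries in {0,1} that satisfies the 2-configuration exhibiting condition but does not satisfy the convex Ramsey condition. -/
/-!
Let `B` be a `0/1` pattern whose columns, read as sets `S_j` of rows, form a 2-independent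
family (any two of them cut out all four Venn regions), and flip the columns of one half
of the indices: `X i j = c j xor B i j`. Flipping preserves 2-independence, which is exactly
the 2-configuration exhibiting condition. For a flipped column `j` and an unflipped `k`,
`P · (X_j - X_k) = 1 - P(S_j) - P(S_k)`, so a convex Ramsey vector `P` forces
`P(S_j) + P(S_k) ≥ 1/2`; hence all columns of one half have `P(S_j) ≥ 1/4` and
`∑_j P(S_j) ≥ n/8`. But `∑_j P(S_j)` is a `P`-average of the row degrees, so this fails once
every row lies in fewer than `n/8` of the sets. Such a family lives in the plane
`(ℤ/m)²`, `m = ⌊√n⌋`: the `2m²` crosses "vertical line ∪ horizontal or diagonal line", of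
which every point lies in at most `4m`; repeating rows and dropping columns makes it `n × n`.
-/

open Finset Function

section BoolMatrix

variable {n m : ℕ}

def boolMatrix (B : Fin n → Fin m → Bool) : Fin n → Fin m → ℝ :=
  fun i j => if B i j then 1 else 0

lemma entries01_boolMatrix (B : Fin n → Fin m → Bool) : Entries01 (boolMatrix B) := by
  intro i j
  unfold boolMatrix
  split <;> simp

def IsTwoIndependent {ρ κ : Type*} (B : ρ → κ → Bool) : Prop :=
  ∀ j k, j ≠ k → ∀ s t : Bool, ∃ i, B i j = s ∧ B i k = t

namespace IsTwoIndependent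

variable {ρ ρ' κ κ' : Type*} {B : ρ → κ → Bool}

lemma comp (hB : IsTwoIndependent B) {f : ρ' → ρ} (hf : Surjective f) {g : κ' → κ}
    (hg : Injective g) : IsTwoIndependent fun i j => B (f i) (g j) := by
  intro j k hjk s t
  obtain ⟨i, hi⟩ := hB (g j) (g k) (hg.ne hjk) s t
  obtain ⟨i', rfl⟩ := hf i
  exact ⟨i', hi⟩

lemma xor_left (hB : IsTwoIndependent B) (c : κ → Bool) :
    IsTwoIndependent fun i j => xor (c j) (B i j) := by
  intro j k hjk s t
  obtain ⟨i, hj, hk⟩ := hB j k hjk (xor (c j) s) (xor (c k) t)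
  exact ⟨i, by simp [hj], by simp [hk]⟩

end IsTwoIndependent

lemma configExhibit_two_boolMatrix {B : Fin n → Fin m → Bool} (hB : IsTwoIndependent B) :
    ConfigExhibit 2 (boolMatrix B) := by
  intro σ hσ l hl
  obtain ⟨i, h0, h1⟩ :=
    hB (l 0) (l 1) (hl.injective.ne (by decide)) (decide (σ 0 = 1)) (decide (σ 1 = 1))
  refine ⟨i, fun t => ?_⟩
  fin_cases t
  · rcases hσ 0 with h | h <;> simp_all [boolMatrix]
  · rcases hσ 1 with h | h <;> simp_all [boolMatrix]

lemma min_card_mul_le_sum_of_le_add {κ : Type*} [Fintype κ] {s : κ → ℝ} (hs : ∀ j, 0 ≤ s j)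
    {O E : Finset κ} {c : ℝ} (hc : 0 ≤ c) (hOE : ∀ j ∈ O, ∀ k ∈ E, c ≤ s j + s k) :
    min #O #E * (c / 2) ≤ ∑ j, s j := by
  have hsub (A : Finset κ) : ∑ j ∈ A, s j ≤ ∑ j, s j :=
    sum_le_sum_of_subset_of_nonneg (subset_univ A) fun j _ _ => hs j
  have hmin (A : Finset κ) (hA : ∀ j ∈ A, c / 2 ≤ s j) : #A * (c / 2) ≤ ∑ j, s j := by
    calc #A * (c / 2) = ∑ _j ∈ A, c / 2 := by rw [sum_const, nsmul_eq_mul]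
      _ ≤ ∑ j ∈ A, s j := sum_le_sum hA
      _ ≤ ∑ j, s j := hsub A
  by_cases hO : ∀ j ∈ O, c / 2 ≤ s j
  · exact le_trans (by gcongr; exact_mod_cast min_le_left _ _) (hmin O hO)
  · push Not at hO
    obtain ⟨j, hj, hsj⟩ := hO
    refine le_trans (by gcongr; exact_mod_cast min_le_right _ _) (hmin E fun k hk => ?_)
    linarith [hOE j hj k hk]

lemma sum_sum_mul_boolMatrix_le {B : Fin n → Fin m → Bool} {P : Fin n → ℝ}
    (hP0 : ∀ i, 0 ≤ P i) (hP1 : ∑ i, P i = 1) {D : ℕ} (hdeg : ∀ i, #{j | B i j} ≤ D) :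
    ∑ j, ∑ i, P i * boolMatrix B i j ≤ D := by
  rw [sum_comm]
  calc ∑ i, ∑ j, P i * boolMatrix B i j = ∑ i, P i * #{j | B i j} := by
        simp only [← mul_sum, boolMatrix, sum_boole]
    _ ≤ ∑ i, P i * D := by
        gcongr with i
        · exact hP0 i
        · exact_mod_cast hdeg i
    _ = D := by rw [← sum_mul, hP1, one_mul]

lemma not_convexRamsey_boolMatrix_xor {B : Fin n → Fin m → Bool} (c : Fin m → Bool) {D h : ℕ}
    (hdeg : ∀ i, #{j | B i j} ≤ D) (hT : h ≤ #{j | c j}) (hF : h ≤ #{j | ¬ c j})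
    (hDh : 4 * D < h) :
    ¬ ConvexRamsey (boolMatrix fun i j => xor (c j) (B i j)) := by
  rintro ⟨P, hP0, hP1, hP⟩
  set s : Fin m → ℝ := fun j => ∑ i, P i * boolMatrix B i j
  have hpair :
      ∀ j ∈ ({j | c j} : Finset _), ∀ k ∈ ({j | ¬ c j} : Finset _), 1 / 2 ≤ s j + s k := by
    intro j hj k hk
    simp only [mem_filter, mem_univ, true_and, Bool.not_eq_true] at hj hk
    have hdiff : ∑ i, P i * (boolMatrix (fun i j => xor (c j) (B i j)) i j
        - boolMatrix (fun i j => xor (c j) (B i j)) i k) = ∑ i, P i - (s j + s k) := by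
      simp only [s, ← sum_add_distrib, ← sum_sub_distrib]
      refine sum_congr rfl fun i _ => ?_
      cases hbj : B i j <;> cases hbk : B i k <;> simp [boolMatrix, hj, hk, hbj, hbk]
    have := hP j k (ne_of_apply_ne c (by rw [hj, hk]; decide))
    rw [hdiff, hP1] at this
    linarith
  have hlow := min_card_mul_le_sum_of_le_add (fun j => sum_nonneg fun i _ => mul_nonneg (hP0 i)
    (by unfold boolMatrix; split <;> norm_num)) (by norm_num) hpair
  have hup := sum_sum_mul_boolMatrix_le hP0 hP1 hdeg
  have hmin : (h : ℝ) ≤ min #{j | c j} #{j | ¬ c j} := by exact_mod_cast le_min hT hF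
  have : (4 * D : ℝ) < h := by exact_mod_cast hDh
  nlinarith

end BoolMatrix

lemma Finset.exists_notMem_of_card_lt {α : Type*} [Fintype α] {s : Finset α}
    (h : #s < Fintype.card α) : ∃ x, x ∉ s :=
  s.exists_not_mem_of_card_lt_enatCard (by simpa using h)

section CrossFamily

variable {G : Type*} [AddCommGroup G]

def lineCoord (t : Bool) (p : G × G) : G := p.2 + if t then p.1 else 0

lemma lineCoord_mk_eq_iff {t : Bool} {x y b : G} :
    lineCoord t (x, y) = b ↔ y = b - if t then x else 0 :=
  eq_sub_iff_add_eq.symm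

variable [DecidableEq G]

/-- Column `(a, b, t)` is the union of the vertical line `x = a` of the plane `G × G`
with the line `y = b` (if `t = false`) or `x + y = b` (if `t = true`). -/
def crossPattern (p : G × G) (c : G × G × Bool) : Bool :=
  decide (p.1 = c.1 ∨ lineCoord c.2.2 p = c.2.1)

lemma exists_crossPattern_and (c c' : G × G × Bool) :
    ∃ p, crossPattern p c ∧ crossPattern p c' :=
  ⟨(c.1, c'.2.1 - if c'.2.2 then c.1 else 0), by simp [crossPattern],
    by simp [crossPattern, lineCoord_mk_eq_iff]⟩

variable [Fintype G]

lemma exists_not_crossPattern_and_not (hG : 3 < Fintype.card G) (c c' : G × G × Bool) :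
    ∃ p, ¬ crossPattern p c ∧ ¬ crossPattern p c' := by
  obtain ⟨x, hx⟩ := exists_notMem_of_card_lt (s := {c.1, c'.1})
    (card_le_two.trans_lt (by omega))
  obtain ⟨y, hy⟩ := exists_notMem_of_card_lt
    (s := {c.2.1 - if c.2.2 then x else 0, c'.2.1 - if c'.2.2 then x else 0})
    (card_le_two.trans_lt (by omega))
  simp only [mem_insert, mem_singleton, not_or] at hx hy
  exact ⟨(x, y), by simp [crossPattern, lineCoord_mk_eq_iff, hx.1, hy.1],
    by simp [crossPattern, lineCoord_mk_eq_iff, hx.2, hy.2]⟩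

lemma exists_crossPattern_and_not (hG : 3 < Fintype.card G) {c c' : G × G × Bool}
    (hcc' : c ≠ c') : ∃ p, crossPattern p c ∧ ¬ crossPattern p c' := by
  obtain ⟨a, b, t⟩ := c
  obtain ⟨a', b', t'⟩ := c'
  by_cases ha : a = a'
  · subst ha
    obtain ⟨x, hx⟩ := exists_notMem_of_card_lt (s := {a, b' - b, b - b'})
      (card_le_three.trans_lt hG)
    refine ⟨(x, b - if t then x else 0), by simp [crossPattern, lineCoord_mk_eq_iff], ?_⟩
    simp only [mem_insert, mem_singleton, not_or] at hx
    simp only [crossPattern, lineCoord_mk_eq_iff, decide_eq_true_eq, not_or]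
    refine ⟨hx.1, fun h => ?_⟩
    cases t <;> cases t' <;> simp_all [sub_eq_iff_eq_add, eq_sub_iff_add_eq, add_comm]
  · obtain ⟨y, hy⟩ := exists_notMem_of_card_lt (s := {b' - if t' then a else 0})
      (by rw [card_singleton]; omega)
    refine ⟨(a, y), by simp [crossPattern], ?_⟩
    simp_all [crossPattern, lineCoord_mk_eq_iff]

lemma isTwoIndependent_crossPattern (hG : 3 < Fintype.card G) :
    IsTwoIndependent (crossPattern (G := G)) := by
  intro c c' hcc' s t
  cases s <;> cases t
  · simpa using exists_not_crossPattern_and_not hG c c'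
  · simpa [and_comm] using exists_crossPattern_and_not hG hcc'.symm
  · simpa using exists_crossPattern_and_not hG hcc'
  · simpa using exists_crossPattern_and c c'

lemma card_filter_crossPattern_le (p : G × G) :
    #{c | crossPattern p c} ≤ 4 * Fintype.card G := by
  have hvert : #{c : G × G × Bool | p.1 = c.1} ≤ #(univ : Finset (G × Bool)) :=
    card_le_card_of_injOn Prod.snd (fun _ _ => mem_coe.2 (mem_univ _))
      fun c hc c' hc' h => Prod.ext ((mem_filter.1 hc).2.symm.trans (mem_filter.1 hc').2) h
  have hline : #{c : G × G × Bool | lineCoord c.2.2 p = c.2.1} ≤ #(univ : Finset (G × Bool)) :=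
    card_le_card_of_injOn (fun c => (c.1, c.2.2)) (fun _ _ => mem_coe.2 (mem_univ _)) <| by
      rintro ⟨a, b, t⟩ hc ⟨a', b', t'⟩ hc' h
      simp only [coe_filter, mem_univ, true_and, Set.mem_ofPred_eq, Prod.mk.injEq] at hc hc' h
      obtain ⟨rfl, rfl⟩ := h
      rw [← hc, ← hc']
  simp only [card_univ, Fintype.card_prod, Fintype.card_bool] at hvert hline
  calc #{c | crossPattern p c}
      ≤ #{c : G × G × Bool | p.1 = c.1} + #{c : G × G × Bool | lineCoord c.2.2 p = c.2.1} := by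
        simp only [crossPattern, decide_eq_true_eq, filter_or]
        exact card_union_le _ _
    _ ≤ 4 * Fintype.card G := by omega

end CrossFamily

lemma exists_isTwoIndependent_card_filter_le {n m : ℕ} (hm : 3 < m) (hmn : m ^ 2 ≤ n)
    (hnm : n ≤ 2 * m ^ 2) :
    ∃ B : Fin n → Fin n → Bool, IsTwoIndependent B ∧ ∀ i, #{j | B i j} ≤ 4 * m := by
  have : NeZero m := ⟨by omega⟩
  have : Nonempty (Fin n) := ⟨⟨0, by nlinarith⟩⟩
  obtain ⟨e⟩ := Embedding.nonempty_of_card_le (α := ZMod m × ZMod m) (β := Fin n)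
    (by simpa [ZMod.card, sq] using hmn)
  obtain ⟨g⟩ := Embedding.nonempty_of_card_le (α := Fin n) (β := ZMod m × ZMod m × Bool)
    (by simp only [Fintype.card_prod, ZMod.card, Fintype.card_fin, Fintype.card_bool]; nlinarith)
  refine ⟨fun i j => crossPattern (invFun e i) (g j),
    (isTwoIndependent_crossPattern (by simpa [ZMod.card] using hm)).comp
      (invFun_surjective e.injective) g.injective, fun i => ?_⟩
  calc #{j | crossPattern (invFun e i) (g j)}
      ≤ #{q | crossPattern (invFun e i) q} :=
        card_le_card_of_injOn g (fun j hj => by simpa using hj) g.injective.injOn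
    _ ≤ 4 * m := by simpa using card_filter_crossPattern_le (invFun e i)

/-- There exists `N` such that for every even `n ≥ N` there is an `n × n` matrix with
entries in `{0,1}` satisfying the `2`-configuration exhibiting condition but not the
convex Ramsey condition. -/
theorem exists_threshold_config_exhibiting_not_convexRamsey :
    ∃ N : ℕ, ∀ n : ℕ, N ≤ n → Even n →
      ∃ X : Fin n → Fin n → ℝ,
        Entries01 X ∧ ConfigExhibit 2 X ∧ ¬ ConvexRamsey X := by
  refine ⟨33 ^ 2, fun n hn _ => ?_⟩
  set m := Nat.sqrt n
  have hm : 33 ≤ m := Nat.le_sqrt'.2 hn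
  have hmn : m ^ 2 ≤ n := Nat.sqrt_le' n
  have hnm : n < (m + 1) ^ 2 := Nat.lt_succ_sqrt' n
  obtain ⟨B, hB, hdeg⟩ := exists_isTwoIndependent_card_filter_le (by omega) hmn (by nlinarith)
  let c : Fin n → Bool := fun j => decide (j.val < n / 2)
  refine ⟨_, entries01_boolMatrix _, configExhibit_two_boolMatrix (hB.xor_left c),
    not_convexRamsey_boolMatrix_xor c hdeg (h := n / 2) ?_ ?_ ?_⟩
  · simp [c, Fin.card_filter_val_lt, Nat.div_le_self]
  · have hsplit := card_filter_add_card_filter_not (s := univ) (fun j : Fin n => c j)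
    simp only [c, decide_eq_true_eq, Fin.card_filter_val_lt, card_univ, Fintype.card_fin]
      at hsplit ⊢
    omega
  · have : 33 * m ≤ n := by nlinarith
    omega
end

section
/- Let n ≥ 2 be an even integer and let Y_n be the n×n matrix whose (i,j) entry is 1 if j ≤ n/2 and 0 if j > n/2. If X is an n×n matrix with entries in {0,1} such that for every row i the number of columns j with X_{i,j} ≠ (Y_n)_{i,j} is at most n/16, then X does not satisfy the convex Ramsey condition. -/
/-- The `n × n` matrix whose first `n/2` columns are constantly `1` and whose
remaining columns are constantly `0` (columns indexed by `Fin n`, so the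
condition "`j ≤ n/2`" for 1-based indices becomes "`(j : ℕ) < n/2`"). -/
def Ymat (n : ℕ) : Fin n → Fin n → ℝ :=
  fun _ j => if (j : ℕ) < n / 2 then 1 else 0

/-- If `n ≥ 2` is even and `X` is an `n × n` `{0,1}`-matrix each of whose rows differs
from the corresponding row of `Y_n` in at most `n/16` entries, then `X` does not satisfy
the convex Ramsey condition. -/
theorem not_convexRamsey_of_close_to_Ymat (n : ℕ) (hn : 2 ≤ n) (hev : Even n)
    (X : Fin n → Fin n → ℝ) (hX : Entries01 X)
    (hclose : ∀ i : Fin n, (({j : Fin n | X i j ≠ Ymat n i j}.ncard : ℝ)) ≤ (n : ℝ) / 16) :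
    ¬ ConvexRamsey X := by
  classical
  rintro ⟨P, hP0, hPsum, hKey⟩
  obtain ⟨t, ht⟩ := hev
  set m : ℕ := n / 2 with hmdef
  have hm1 : 1 ≤ m := by omega
  have hmn : m < n := by omega
  have hn2 : n = 2 * m := by omega
  have hnr : (n : ℝ) = 2 * (m : ℝ) := by exact_mod_cast congrArg (Nat.cast : ℕ → ℝ) hn2
  set A : Finset (Fin n) := Finset.univ.filter (fun j => (j : ℕ) < m) with hA
  set B : Finset (Fin n) := Finset.univ.filter (fun j => ¬ (j : ℕ) < m) with hB
  have hAcard : A.card = m := by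
    have : A = Finset.Iio (⟨m, hmn⟩ : Fin n) := by
      ext j; simp [hA, Fin.lt_def]
    rw [this, Fin.card_Iio]
  have hBcard : B.card = m := by
    have h := Finset.card_filter_add_card_filter_not
      (s := (Finset.univ : Finset (Fin n))) (p := fun j : Fin n => (j : ℕ) < m)
    rw [Finset.card_univ, Fintype.card_fin] at h
    have : A.card + B.card = n := h
    omega
  -- difference sets
  set D : Fin n → Finset (Fin n) :=
    fun i => Finset.univ.filter (fun j => X i j ≠ Ymat n i j) with hD
  have hDcard : ∀ i, ((D i).card : ℝ) ≤ (n : ℝ) / 16 := by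
    intro i
    have h1 : {j : Fin n | X i j ≠ Ymat n i j}.ncard = (D i).card := by
      rw [Set.ncard_eq_toFinset_card']
      congr 1
      ext j
      simp [hD]
    have := hclose i
    rwa [h1] at this
  have hX01 : ∀ i j, 0 ≤ X i j ∧ X i j ≤ 1 := by
    intro i j; rcases hX i j with h | h <;> simp [h]
  -- row sums over A
  have hSA : ∀ i, (m : ℝ) - (n : ℝ) / 16 ≤ ∑ j ∈ A, X i j := by
    intro i
    have hsub : ∑ j ∈ A \ D i, X i j ≤ ∑ j ∈ A, X i j := by
      apply Finset.sum_le_sum_of_subset_of_nonneg (Finset.sdiff_subset)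
      intro j _ _; exact (hX01 i j).1
    have hval : ∑ j ∈ A \ D i, X i j = ((A \ D i).card : ℝ) := by
      rw [Finset.sum_congr rfl (fun j hj => ?_), Finset.sum_const, nsmul_eq_mul, mul_one]
      have hjA : (j : ℕ) < m := by
        have := (Finset.mem_sdiff.mp hj).1
        simpa [hA] using this
      have hjD : ¬ X i j ≠ Ymat n i j := by
        have := (Finset.mem_sdiff.mp hj).2
        simpa [hD] using this
      have : X i j = Ymat n i j := not_not.mp hjD
      rw [this, Ymat, if_pos hjA]
    have hcard : (A.card : ℝ) ≤ ((A \ D i).card : ℝ) + ((D i).card : ℝ) := by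
      exact_mod_cast Finset.card_le_card_sdiff_add_card
    rw [hAcard] at hcard
    have := hDcard i
    linarith [hsub, hval.symm.le, hval.le]
  -- row sums over B
  have hSB : ∀ i, ∑ k ∈ B, X i k ≤ (n : ℝ) / 16 := by
    intro i
    have h1 : ∑ k ∈ B, X i k ≤ ∑ k ∈ B, (if X i k ≠ Ymat n i k then (1:ℝ) else 0) := by
      apply Finset.sum_le_sum
      intro k hk
      by_cases hd : X i k ≠ Ymat n i k
      · rw [if_pos hd]; exact (hX01 i k).2
      · rw [if_neg hd]
        have hkB : ¬ (k : ℕ) < m := by simpa [hB] using hk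
        have : X i k = Ymat n i k := not_not.mp hd
        rw [this, Ymat, if_neg hkB]
    have h2 : ∑ k ∈ B, (if X i k ≠ Ymat n i k then (1:ℝ) else 0)
        = ((B.filter (fun k => X i k ≠ Ymat n i k)).card : ℝ) := by
      rw [Finset.sum_ite, Finset.sum_const, Finset.sum_const]
      simp
    have h3 : (B.filter (fun k => X i k ≠ Ymat n i k)).card ≤ (D i).card := by
      apply Finset.card_le_card
      intro k hk
      simp only [hD, Finset.mem_filter, Finset.mem_univ, true_and]
      exact (Finset.mem_filter.mp hk).2
    have := hDcard i
    calc ∑ k ∈ B, X i k ≤ ((B.filter (fun k => X i k ≠ Ymat n i k)).card : ℝ) := by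
          rw [← h2]; exact h1
      _ ≤ ((D i).card : ℝ) := by exact_mod_cast h3
      _ ≤ (n : ℝ) / 16 := this
  -- the double sum
  set S : ℝ := ∑ j ∈ A, ∑ k ∈ B, ∑ i, P i * (X i j - X i k) with hS
  have hupper : S ≤ (m : ℝ) * (m : ℝ) * (1 / 2) := by
    have : S ≤ ∑ j ∈ A, ∑ k ∈ B, (1 / 2 : ℝ) := by
      apply Finset.sum_le_sum
      intro j hj
      apply Finset.sum_le_sum
      intro k hk
      apply hKey
      intro hjk
      have hjA : (j : ℕ) < m := by simpa [hA] using hj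
      have hkB : ¬ (k : ℕ) < m := by simpa [hB] using hk
      rw [hjk] at hjA; exact hkB hjA
    simpa [Finset.sum_const, hAcard, hBcard, mul_assoc] using this
  have hinner : ∀ i, ∑ j ∈ A, ∑ k ∈ B, (X i j - X i k)
      = (m : ℝ) * ∑ j ∈ A, X i j - (m : ℝ) * ∑ k ∈ B, X i k := by
    intro i
    simp only [Finset.sum_sub_distrib, Finset.sum_const, nsmul_eq_mul, hAcard, hBcard,
      ← Finset.mul_sum]
  have hswap : S = ∑ i, P i * ((m : ℝ) * ∑ j ∈ A, X i j - (m : ℝ) * ∑ k ∈ B, X i k) := by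
    rw [hS]
    calc ∑ j ∈ A, ∑ k ∈ B, ∑ i, P i * (X i j - X i k)
        = ∑ k ∈ B, ∑ j ∈ A, ∑ i, P i * (X i j - X i k) := Finset.sum_comm
      _ = ∑ k ∈ B, ∑ i, ∑ j ∈ A, P i * (X i j - X i k) :=
          Finset.sum_congr rfl (fun k _ => Finset.sum_comm)
      _ = ∑ i, ∑ k ∈ B, ∑ j ∈ A, P i * (X i j - X i k) := Finset.sum_comm
      _ = ∑ i, ∑ j ∈ A, ∑ k ∈ B, P i * (X i j - X i k) :=
          Finset.sum_congr rfl (fun i _ => Finset.sum_comm)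
      _ = ∑ i, P i * ∑ j ∈ A, ∑ k ∈ B, (X i j - X i k) := by
          apply Finset.sum_congr rfl
          intro i _
          rw [Finset.mul_sum]
          exact Finset.sum_congr rfl (fun j _ => (Finset.mul_sum _ _ _).symm)
      _ = _ := Finset.sum_congr rfl (fun i _ => by rw [hinner i])
  have hlower : (3 : ℝ) * m * m / 4 ≤ S := by
    rw [hswap]
    have hterm : ∀ i, (3 : ℝ) * m * m / 4 * P i ≤
        P i * ((m : ℝ) * ∑ j ∈ A, X i j - (m : ℝ) * ∑ k ∈ B, X i k) := by
      intro i
      have h1 := hSA i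
      have h2 := hSB i
      have hm0 : (0 : ℝ) ≤ m := by positivity
      have : (3 : ℝ) * m * m / 4 ≤ (m : ℝ) * (∑ j ∈ A, X i j) - (m : ℝ) * ∑ k ∈ B, X i k := by
        have : (m : ℝ) - (n:ℝ)/16 - (n:ℝ)/16 ≤ (∑ j ∈ A, X i j) - ∑ k ∈ B, X i k := by linarith
        rw [hnr] at this
        nlinarith [mul_le_mul_of_nonneg_left this hm0]
      nlinarith [hP0 i, this]
    calc (3 : ℝ) * m * m / 4 = ∑ i, (3 : ℝ) * m * m / 4 * P i := by
          rw [← Finset.mul_sum, hPsum, mul_one]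
      _ ≤ _ := Finset.sum_le_sum (fun i _ => hterm i)
  have hmr : (1 : ℝ) ≤ m := by exact_mod_cast hm1
  nlinarith [hupper, hlower, hmr]
end

section
/- Let n ≥ 2 be an even integer and 0 < p ≤ 1/2. Under the random flip model applied to Y_n with flip probability p, the probability that the resulting random matrix X fails the 2-configuration exhibiting condition is at most 2·n·(n−1)·(1−p²)^n. -/
open MeasureTheory

/-- The matrix obtained from `Y_n` by flipping the entries indicated by the
flip pattern `F`. -/
def flipMat (n : ℕ) (F : Fin n × Fin n → Bool) : Fin n → Fin n → ℝ :=
  fun i j => if F (i, j) then 1 - Ymat n i j else Ymat n i j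

/-! A matrix `flipMat n F` fails the `k`-configuration condition only if, for some columns
`l₁ < ⋯ < l_k` and some pattern `b` of flip bits, no row of `F` carries `b` on those columns: as
`Y_n` is constant down each column, the bits decide which values are read there. The rows of `F` are
independent and each carries a given pattern with probability at least `p^k`, so each such event has
probability at most `(1 - p^k)^n`. A union bound over the `2^k · C(n, k)` events gives the claim;
for `k = 2` this count is `2n(n - 1)`. -/

set_option linter.deprecated false

open Function
open scoped ENNReal

namespace MeasureTheory

variable {ι κ α : Type*} [Fintype ι] [Fintype κ] [MeasurableSpace α]

theorem measurePreserving_curry (μ : Measure α) [SigmaFinite μ] :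
    MeasurePreserving (MeasurableEquiv.curry ι κ α)
      (Measure.pi fun _ ↦ μ) (Measure.pi fun _ ↦ Measure.pi fun _ ↦ μ) := by
  refine MeasurePreserving.symm _ ⟨(MeasurableEquiv.curry ι κ α).symm.measurable, ?_⟩
  refine (Measure.pi_eq fun s hs ↦ ?_).symm
  have hpre : (MeasurableEquiv.curry ι κ α).symm ⁻¹' Set.univ.pi s =
      Set.univ.pi fun i ↦ Set.univ.pi fun k ↦ s (i, k) := by
    ext F; simp [MeasurableEquiv.coe_curry_symm, Prod.forall]
  rw [Measure.map_apply (MeasurableEquiv.measurable _) (.univ_pi hs), hpre]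
  simp only [Measure.pi_pi]
  exact (Fintype.prod_prod_type fun c ↦ μ (s c)).symm

theorem Measure.pi_setOf_forall_apply_eq {ι' : Type*} [Fintype ι'] (μ : Measure α)
    [IsProbabilityMeasure μ] {l : ι' → κ} (hl : Injective l) (b : ι' → α) :
    Measure.pi (fun _ : κ ↦ μ) {h | ∀ i, h (l i) = b i} = ∏ i, μ {b i} := by
  have hbox : {h : κ → α | ∀ i, h (l i) = b i} =
      Set.univ.pi (Function.extend l (fun i ↦ {b i}) fun _ ↦ Set.univ) := by
    ext h
    simp only [Set.mem_setOf_eq, Set.mem_univ_pi]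
    refine ⟨fun hb c ↦ ?_, fun hb i ↦ by simpa [hl.extend_apply] using hb (l i)⟩
    by_cases hc : ∃ i, l i = c
    · obtain ⟨i, rfl⟩ := hc
      simpa [hl.extend_apply] using hb i
    · simp [extend_apply' _ _ _ hc]
  rw [hbox, Measure.pi_pi]
  refine (Fintype.prod_of_injective l hl _ _ (fun c hc ↦ ?_) fun i ↦ ?_).symm
  · simp [extend_apply' _ _ _ hc]
  · simp [hl.extend_apply]

theorem measure_pi_forall_exists_apply_ne {ι' : Type*} [Fintype ι']
    [MeasurableSingletonClass α] (μ : Measure α) [IsProbabilityMeasure μ] {l : ι' → κ}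
    (hl : Injective l) (b : ι' → α) :
    Measure.pi (fun _ : ι × κ ↦ μ) {F | ∀ j, ∃ i, F (j, l i) ≠ b i} =
      (1 - ∏ i, μ {b i}) ^ Fintype.card ι := by
  have hmatch : MeasurableSet {h : κ → α | ∀ i, h (l i) = b i} := by
    rw [Set.setOf_forall]
    exact .iInter fun i ↦ (measurableSet_singleton (b i)).preimage (measurable_pi_apply (l i))
  have hrows : {F : ι × κ → α | ∀ j, ∃ i, F (j, l i) ≠ b i} =
      MeasurableEquiv.curry ι κ α ⁻¹'
        Set.univ.pi fun _ ↦ {h | ∀ i, h (l i) = b i}ᶜ := by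
    ext F; simp [MeasurableEquiv.coe_curry]
  rw [hrows, (measurePreserving_curry μ).measure_preimage_equiv, Measure.pi_pi,
    prob_compl_eq_one_sub hmatch, Measure.pi_setOf_forall_apply_eq μ hl,
    Finset.prod_const, Finset.card_univ]

end MeasureTheory

theorem PMF.le_bernoulli_toMeasure_singleton {q : NNReal} (h : q ≤ 1) (hq : q ≤ 1 / 2)
    (b : Bool) :
    (q : ℝ≥0∞) ≤ (PMF.bernoulli q h).toMeasure {b} := by
  rw [PMF.toMeasure_apply_singleton _ _ (measurableSet_singleton b)]
  cases b
  · have : q ≤ 1 - q := le_tsub_of_add_le_left ((add_le_add hq hq).trans_eq (add_halves 1))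
    simpa [PMF.bernoulli_apply, ENNReal.coe_sub] using ENNReal.coe_le_coe.2 this
  · simp [PMF.bernoulli_apply]

section FlipModel

variable {n k : ℕ}

theorem flipMat_eq_iff (F : Fin n × Fin n → Bool) (j c : Fin n) {v : ℝ}
    (hv : v = 0 ∨ v = 1) :
    flipMat n F j c = v ↔ F (j, c) = decide (Ymat n j c ≠ v) := by
  unfold flipMat Ymat
  by_cases hc : (c : ℕ) < n / 2 <;> rcases hv with rfl | rfl <;> cases F (j, c) <;> norm_num [hc]

open Set.powersetCard in
theorem setOf_not_configExhibit_flipMat_subset :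
    {F : Fin n × Fin n → Bool | ¬ ConfigExhibit k (flipMat n F)} ⊆
      ⋃ (s : Set.powersetCard (Fin n) k) (b : Fin k → Bool),
        {F | ∀ j, ∃ i, F (j, ofFinEmbEquiv.symm s i) ≠ b i} := by
  intro F hF
  simp only [ConfigExhibit, Set.mem_setOf_eq, not_forall, not_exists] at hF
  obtain ⟨σ, hσ, l, hl, hmiss⟩ := hF
  have hs : ofFinEmbEquiv.symm (ofFinEmbEquiv (OrderEmbedding.ofStrictMono l hl)) = l := by
    rw [Equiv.symm_apply_apply]; rfl
  -- `Y_n` is constant down each column, so the flips needed to read `σ` do not depend on the row.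
  refine Set.mem_iUnion₂.2 ⟨ofFinEmbEquiv (OrderEmbedding.ofStrictMono l hl),
    fun i ↦ decide ((if (l i : ℕ) < n / 2 then (1 : ℝ) else 0) ≠ σ i), fun j ↦ ?_⟩
  obtain ⟨i, hi⟩ := hmiss j
  refine ⟨i, fun hF ↦ hi ((flipMat_eq_iff F j (l i) (hσ i)).2 ?_)⟩
  rwa [hs] at hF

open Set.powersetCard in
theorem measure_not_configExhibit_flipMat_le (μ : Measure Bool) [IsProbabilityMeasure μ]
    {ε : ℝ≥0∞} (hε : ∀ b, ε ≤ μ {b}) :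
    Measure.pi (fun _ : Fin n × Fin n ↦ μ) {F | ¬ ConfigExhibit k (flipMat n F)} ≤
      n.choose k * 2 ^ k * (1 - ε ^ k) ^ n := by
  calc _ ≤ ∑ s : Set.powersetCard (Fin n) k, ∑ b : Fin k → Bool, Measure.pi (fun _ ↦ μ)
          {F | ∀ j, ∃ i, F (j, ofFinEmbEquiv.symm s i) ≠ b i} :=
        (measure_mono setOf_not_configExhibit_flipMat_subset).trans <|
          (measure_iUnion_fintype_le _ _).trans <|
            Finset.sum_le_sum fun s _ ↦ measure_iUnion_fintype_le _ _
    _ ≤ ∑ _s : Set.powersetCard (Fin n) k, ∑ _b : Fin k → Bool, (1 - ε ^ k) ^ n := by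
        gcongr with s _ b _
        rw [measure_pi_forall_exists_apply_ne μ (ofFinEmbEquiv.symm s).injective, Fintype.card_fin]
        gcongr
        simpa using Finset.pow_card_le_prod Finset.univ _ _ fun i _ ↦ hε (b i)
    _ = n.choose k * 2 ^ k * (1 - ε ^ k) ^ n := by
        rw [Finset.sum_const, Finset.sum_const, Finset.card_univ, Finset.card_univ,
          ← Nat.card_eq_fintype_card, Set.powersetCard.card, Nat.card_fin]
        simp [mul_assoc]

end FlipModel

/-- Under the random flip model applied to `Y_n` with flip probability `p ∈ (0, 1/2]`,
the probability that the resulting matrix fails the `2`-configuration exhibiting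
condition is at most `2 · n · (n - 1) · (1 - p²)ⁿ`. -/
theorem prob_config_fail_le (n : ℕ)
    (p : ℝ) (hp0 : 0 < p) (hp1 : p ≤ 1 / 2) :
    (Measure.pi fun _ : Fin n × Fin n =>
        (PMF.bernoulli (Real.toNNReal p)
          (by exact Real.toNNReal_le_one.mpr (by linarith))).toMeasure)
      {F : Fin n × Fin n → Bool | ¬ ConfigExhibit 2 (flipMat n F)}
      ≤ ENNReal.ofReal (2 * n * (n - 1) * (1 - p ^ 2) ^ n) := by
  have hq : Real.toNNReal p ≤ 1 / 2 := by
    rw [Real.toNNReal_le_iff_le_coe]; simpa using hp1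
  refine (measure_not_configExhibit_flipMat_le (ε := ENNReal.ofReal p) _
    (PMF.le_bernoulli_toMeasure_singleton _ hq)).trans_eq ?_
  have hcount : ((n.choose 2 * 2 ^ 2 : ℕ) : ℝ) = 2 * n * (n - 1) := by
    push_cast [Nat.cast_choose_two]; ring
  have hrow : 1 - ENNReal.ofReal p ^ 2 = ENNReal.ofReal (1 - p ^ 2) := by
    rw [← ENNReal.ofReal_pow hp0.le, ← ENNReal.ofReal_one, ENNReal.ofReal_sub _ (by positivity)]
  rw [← hcount, hrow, ENNReal.ofReal_mul (by positivity), ENNReal.ofReal_natCast,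
    ENNReal.ofReal_pow (by nlinarith)]
  norm_num
end

section
/- Let α be an irrational real number with 0 < α < 1. For every positive integer N there exists a finite simple graph G in the class K_α whose vertex set is partitioned into two nonempty sets E and F such that −1/N < δ_α(V(G)) − δ_α(F) < 0 and every triangle (3-element clique) of G has all three of its vertices in F. -/
/-- The set of edges of `G` with both endpoints in `S`. -/
def edgesWithin {V : Type*} (G : SimpleGraph V) (S : Set V) : Set (Sym2 V) :=
  {e | e ∈ G.edgeSet ∧ ∀ v ∈ e, v ∈ S}

/-- The predimension `δ_α(S) = |S| − α · e(S)`. -/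
noncomputable def delta {V : Type*} (α : ℝ) (G : SimpleGraph V) (S : Set V) : ℝ :=
  (S.ncard : ℝ) - α * ((edgesWithin G S).ncard : ℝ)

/-- `G` belongs to the class `K_α`: every set of vertices has nonnegative predimension. -/
def InK {V : Type*} (α : ℝ) (G : SimpleGraph V) : Prop :=
  ∀ S : Set V, 0 ≤ delta α G S

/-!
Let `G` be a star with `k` leaves plus `a - 1` isolated vertices, and let `F` be the set of
leaves. Every vertex set spans at most as many edges as it has leaves, so `G ∈ K_α` for `α ≤ 1`;
`G` is bipartite, so it has no triangles; and `δ_α(V) − δ_α(F) = a − kα`. It remains to find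
`a, k ≥ 1` with `a < kα < a + 1/N`. Dirichlet's theorem puts some `kα` within `1/N` of an
integer, but possibly below it; a suitable multiple `t k α` then lands just above an integer.
-/

open Set

lemma exists_int_le_nat_mul_lt_add_abs {β : ℝ} (hβ : β ≠ 0) (hβ1 : |β| ≤ 1) :
    ∃ (t : ℕ) (i : ℤ), 0 < t ∧ (i : ℝ) ≤ t * β ∧ t * β < i + |β| := by
  rcases hβ.lt_or_gt with hneg | hpos
  · -- the largest `t` with `t |β| ≤ 1` puts `t β` in `[-1, -1 + |β|)`
    rw [abs_of_neg hneg] at hβ1 ⊢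
    have hγ : 0 < -β := neg_pos.2 hneg
    have hinv : 1 ≤ 1 / -β := (one_le_div hγ).2 hβ1
    have hle := (le_div_iff₀ hγ).1 (Nat.floor_le (zero_le_one.trans hinv))
    have hlt := (div_lt_iff₀ hγ).1 (Nat.lt_floor_add_one (1 / -β))
    refine ⟨⌊1 / -β⌋₊, -1, Nat.floor_pos.2 hinv, ?_, ?_⟩ <;> push_cast <;> linarith
  · -- the smallest `t` with `t β ≥ 1` puts `t β` in `[1, 1 + β)`
    rw [abs_of_pos hpos]
    have hle := (div_le_iff₀ hpos).1 (Nat.le_ceil (1 / β))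
    have hlt := mul_lt_mul_of_pos_right (Nat.ceil_lt_add_one (one_div_pos.2 hpos).le) hpos
    rw [add_mul, one_div_mul_cancel hpos.ne', one_mul] at hlt
    refine ⟨⌈1 / β⌉₊, 1, Nat.ceil_pos.2 (one_div_pos.2 hpos), ?_, ?_⟩ <;> push_cast <;> linarith

theorem Irrational.exists_int_lt_nat_mul_lt_add {ξ ε : ℝ} (hξ : Irrational ξ) (hε : 0 < ε) :
    ∃ (k : ℕ) (j : ℤ), 0 < k ∧ (j : ℝ) < k * ξ ∧ k * ξ < j + ε := by
  obtain ⟨n, hn⟩ := exists_nat_one_div_lt hε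
  obtain ⟨k, hk, -, hkξ⟩ := Real.exists_nat_abs_mul_sub_round_le ξ n.succ_pos
  set β := k * ξ - round (k * ξ)
  have hβ : β ≠ 0 := sub_ne_zero.2 ((hξ.natCast_mul hk.ne').ne_int _)
  have hβε : |β| < ε := by
    refine hkξ.trans_lt (lt_of_le_of_lt ?_ hn)
    gcongr
    simp
  obtain ⟨t, i, ht, hi, hti⟩ :=
    exists_int_le_nat_mul_lt_add_abs hβ ((abs_sub_round _).trans (by norm_num))
  have hdiff : ((t * k : ℕ) : ℝ) * ξ - ((t * round (k * ξ) + i : ℤ) : ℝ) = t * β - i := by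
    push_cast
    ring
  have hne : ((t * k : ℕ) : ℝ) * ξ ≠ ((t * round (k * ξ) + i : ℤ) : ℝ) :=
    (hξ.natCast_mul (by positivity)).ne_int _
  refine ⟨t * k, t * round (k * ξ) + i, by positivity, lt_of_le_of_ne ?_ hne.symm, ?_⟩ <;>
    linarith

theorem Irrational.exists_nat_lt_nat_mul_lt_add {α ε : ℝ} (hα : Irrational α) (h0 : 0 < α)
    (hε : 0 < ε) (hε1 : ε ≤ 1) :
    ∃ a k : ℕ, 0 < a ∧ 0 < k ∧ (a : ℝ) < k * α ∧ k * α < a + ε := by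
  -- approximating multiples of `M α ≥ 1` rather than of `α` keeps the integer part positive
  obtain ⟨M, hM⟩ := exists_nat_ge (1 / α)
  have hMα : 1 ≤ M * α := (div_le_iff₀ h0).1 hM
  have hM0 : M ≠ 0 := by rintro rfl; norm_num at hMα
  obtain ⟨k, j, hk, hlo, hhi⟩ := (hα.natCast_mul hM0).exists_int_lt_nat_mul_lt_add hε
  have hkMα : 1 ≤ k * (M * α) := one_le_mul_of_one_le_of_one_le (by exact_mod_cast hk) hMα
  have hj : 0 < j := by exact_mod_cast (show (0 : ℝ) < j by linarith)
  lift j to ℕ using hj.le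
  push_cast at hlo hhi
  refine ⟨j, k * M, by exact_mod_cast hj, by positivity, ?_, ?_⟩ <;> push_cast <;> linarith

lemma Sym2.ncard_image_mk_left {V : Type*} (c : V) (T : Set V) :
    ((fun v => s(c, v)) '' T).ncard = T.ncard :=
  ncard_image_of_injective _ fun _ _ => Sym2.congr_right.1

namespace SimpleGraph

variable {V : Type*} {c : V} {L S : Set V}

lemma inK_of_ncard_edgesWithin_le {α : ℝ} {G : SimpleGraph V} (hα : α ≤ 1)
    (h : ∀ S, (edgesWithin G S).ncard ≤ S.ncard) : InK α G := fun S =>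
  sub_nonneg.2 <| (mul_le_of_le_one_left (Nat.cast_nonneg _) hα).trans (by exact_mod_cast h S)

def starGraphOn (c : V) (L : Set V) : SimpleGraph V :=
  fromRel fun u v => u = c ∧ v ∈ L

lemma starGraphOn_adj {u v : V} :
    (starGraphOn c L).Adj u v ↔ u ≠ v ∧ (u = c ∧ v ∈ L ∨ v = c ∧ u ∈ L) :=
  fromRel_adj _ _ _

lemma starGraphOn_colorable_two : (starGraphOn c L).Colorable 2 := by
  classical
  refine ⟨Coloring.mk (fun v => if v = c then 0 else 1) fun {u v} h => ?_⟩
  rcases starGraphOn_adj.1 h with ⟨huv, ⟨rfl, -⟩ | ⟨rfl, -⟩⟩ <;> simp [huv, huv.symm]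

lemma starGraphOn_cliqueFree_three : (starGraphOn c L).CliqueFree 3 :=
  starGraphOn_colorable_two.cliqueFree (by norm_num)

lemma exists_mem_eq_mk_of_mem_edgeSet_starGraphOn {e : Sym2 V}
    (he : e ∈ (starGraphOn c L).edgeSet) : ∃ v ∈ L, e = s(c, v) := by
  induction e with
  | _ u v =>
    rcases starGraphOn_adj.1 he with ⟨-, ⟨rfl, hv⟩ | ⟨rfl, hu⟩⟩
    · exact ⟨v, hv, rfl⟩
    · exact ⟨u, hu, Sym2.eq_swap⟩

lemma edgesWithin_starGraphOn_of_mem (hc : c ∉ L) (hS : c ∈ S) :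
    edgesWithin (starGraphOn c L) S = (fun v => s(c, v)) '' (S ∩ L) := by
  ext e
  constructor
  · rintro ⟨he, heS⟩
    obtain ⟨v, hv, rfl⟩ := exists_mem_eq_mk_of_mem_edgeSet_starGraphOn he
    exact ⟨v, ⟨heS v (Sym2.mem_mk_right c v), hv⟩, rfl⟩
  · rintro ⟨v, ⟨hvS, hvL⟩, rfl⟩
    refine ⟨starGraphOn_adj.2 ⟨fun h : c = v => hc (h ▸ hvL), Or.inl ⟨rfl, hvL⟩⟩, fun w hw => ?_⟩
    rcases Sym2.mem_iff.1 hw with rfl | rfl <;> assumption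

lemma edgesWithin_starGraphOn_of_notMem (hS : c ∉ S) : edgesWithin (starGraphOn c L) S = ∅ :=
  eq_empty_of_forall_notMem fun _ ⟨he, heS⟩ => by
    obtain ⟨v, -, rfl⟩ := exists_mem_eq_mk_of_mem_edgeSet_starGraphOn he
    exact hS (heS c (Sym2.mem_mk_left c v))

lemma starGraphOn_inK [Finite V] {α : ℝ} (hα : α ≤ 1) (hc : c ∉ L) :
    InK α (starGraphOn c L) := by
  refine inK_of_ncard_edgesWithin_le hα fun S => ?_
  by_cases hS : c ∈ S
  · rw [edgesWithin_starGraphOn_of_mem hc hS, Sym2.ncard_image_mk_left]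
    exact ncard_le_ncard inter_subset_left
  · simp [edgesWithin_starGraphOn_of_notMem hS]

lemma delta_univ_sub_delta_starGraphOn_leaves [Finite V] (α : ℝ) (hc : c ∉ L) :
    delta α (starGraphOn c L) univ - delta α (starGraphOn c L) L = Lᶜ.ncard - α * L.ncard := by
  rw [delta, delta, edgesWithin_starGraphOn_of_mem hc (mem_univ c),
    edgesWithin_starGraphOn_of_notMem hc, univ_inter, Sym2.ncard_image_mk_left, ncard_empty,
    ncard_univ, ← ncard_add_ncard_compl L]
  push_cast
  ring

end SimpleGraph

lemma Fin.ncard_range_natAdd (a k : ℕ) :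
    (range (Fin.natAdd a : Fin k → Fin (a + k))).ncard = k := by
  rw [ncard_range_of_injective (Fin.natAdd_injective k a), Nat.card_eq_fintype_card,
    Fintype.card_fin]

lemma Fin.ncard_compl_range_natAdd (a k : ℕ) :
    (range (Fin.natAdd a : Fin k → Fin (a + k)))ᶜ.ncard = a := by
  have := ncard_add_ncard_compl (range (Fin.natAdd a : Fin k → Fin (a + k)))
  rw [Fin.ncard_range_natAdd, Nat.card_eq_fintype_card, Fintype.card_fin] at this
  omega

/-- For irrational `α ∈ (0,1)` and every positive integer `N`, there is a finite graph
`G ∈ K_α` whose vertex set is partitioned into nonempty sets `E` and `F` such that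
`-1/N < δ_α(V(G)) − δ_α(F) < 0` and every triangle of `G` has all its vertices in `F`. -/
theorem exists_graph_small_relative_delta (α : ℝ) (hirr : Irrational α)
    (h0 : 0 < α) (h1 : α < 1) (N : ℕ) (hN : 0 < N) :
    ∃ (m : ℕ) (G : SimpleGraph (Fin m)), InK α G ∧
      ∃ E F : Set (Fin m), E.Nonempty ∧ F.Nonempty ∧ Disjoint E F ∧ E ∪ F = Set.univ ∧
        -(1 / (N : ℝ)) < delta α G Set.univ - delta α G F ∧
        delta α G Set.univ - delta α G F < 0 ∧
        ∀ T : Finset (Fin m), G.IsNClique 3 T → ↑T ⊆ F := by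
  obtain ⟨a, k, ha, hk, hlo, hhi⟩ := hirr.exists_nat_lt_nat_mul_lt_add h0 (ε := 1 / N)
    (by positivity) (div_le_one_of_le₀ (by exact_mod_cast hN) N.cast_nonneg)
  let c : Fin (a + k) := ⟨0, by omega⟩
  let L := range (Fin.natAdd a : Fin k → Fin (a + k))
  have hc : c ∉ L := by simp only [L, c, Fin.range_natAdd, mem_ofPred_eq]; omega
  have hδ := SimpleGraph.delta_univ_sub_delta_starGraphOn_leaves α hc
  rw [Fin.ncard_compl_range_natAdd, Fin.ncard_range_natAdd] at hδ
  refine ⟨a + k, SimpleGraph.starGraphOn c L,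
    SimpleGraph.starGraphOn_inK h1.le hc, Lᶜ, L, ⟨c, hc⟩,
    ⟨Fin.natAdd a ⟨0, hk⟩, mem_range_self _⟩, disjoint_compl_left, compl_union_self L,
    by linarith, by linarith, fun T hT => (SimpleGraph.starGraphOn_cliqueFree_three T hT).elim⟩
end
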